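/- arXiv:1209.4985 — 2 statements merged into one kernel-verified Lean document; each statement's English description precedes it below -/
import Mathlib

section
/- Let k, n ∈ ℕ with k ≥ 2, let I and J be disjoint subsets of {0,…,n−1}, let A ⊆ [k]^n and let 0 < ε < k^{−|I|}. If e_{I∪J}(A) − e_J(A) ≤ ε^4, then dens( { z ∈ [k]^J : |dens(A_{(y,z)}) − dens(A_z)| ≤ ε for every y ∈ [k]^I } ) ≥ 1 − ε. -/
/-!
`[k]^n` is identified with the set of functions `Fin n → Fin k`; for `I : Finset (Fin n)`,
a located word `y ∈ [k]^I` is a function `{i // i ∈ I} → Fin k`.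
-/

/-- `dens(A_y)`: the density, in `[k]^{{0,…,n-1} ∖ I}`, of the section of `A` at
`y ∈ [k]^I`, i.e. `|{x ∈ A : x ∣_I = y}| / k^{n-|I|}`. -/
noncomputable def secDens (k n : ℕ) (A : Set (Fin n → Fin k)) (I : Finset (Fin n))
    (y : {i : Fin n // i ∈ I} → Fin k) : ℝ :=
  (Set.ncard {x ∈ A | ∀ i : {i : Fin n // i ∈ I}, x i.1 = y i} : ℝ) /
    (k : ℝ) ^ (n - I.card)

/-- `dens(A_{(y,z)})`: the density, in `[k]^M` with `M = {0,…,n-1} ∖ (I ∪ J)`, of the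
section of `A` at the pair `(y, z) ∈ [k]^I × [k]^J`. -/
noncomputable def secDens₂ (k n : ℕ) (A : Set (Fin n → Fin k)) (I J : Finset (Fin n))
    (y : {i : Fin n // i ∈ I} → Fin k) (z : {j : Fin n // j ∈ J} → Fin k) : ℝ :=
  (Set.ncard {x ∈ A | (∀ i : {i : Fin n // i ∈ I}, x i.1 = y i) ∧
      ∀ j : {j : Fin n // j ∈ J}, x j.1 = z j} : ℝ) /
    (k : ℝ) ^ (n - I.card - J.card)

/-- The energy `e_I(A) = avg_{y ∈ [k]^I} dens(A_y)²`. -/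
noncomputable def energy (k n : ℕ) (A : Set (Fin n → Fin k)) (I : Finset (Fin n)) : ℝ :=
  (∑ y : ({i : Fin n // i ∈ I} → Fin k), (secDens k n A I y) ^ 2) / (k : ℝ) ^ I.card

/-!
Since `∑_y dens(A_{(y,z)}) = k^|I| · dens(A_z)`, the increment `k^{|I|+|J|} (e_{I∪J}(A) - e_J(A))`
is the sum over `z` of the variances `∑_y (dens(A_{(y,z)}) - dens(A_z))²`. A `z` at which some `y`
deviates by more than `ε` contributes at least `ε²`, so by Markov's inequality there are at most
`k^{|I|+|J|} ε² ≤ ε k^|J|` such `z`.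
-/

open Finset

theorem Finset.sum_sq_sub_eq_of_sum_eq_card_mul {ι : Type*} (s : Finset ι) (f : ι → ℝ) {a : ℝ}
    (h : ∑ i ∈ s, f i = #s * a) :
    ∑ i ∈ s, (f i - a) ^ 2 = ∑ i ∈ s, f i ^ 2 - #s * a ^ 2 := by
  have expand : ∀ i ∈ s, (f i - a) ^ 2 = f i ^ 2 - 2 * a * f i + a ^ 2 := fun i _ => by ring
  rw [sum_congr rfl expand, sum_add_distrib, sum_sub_distrib, ← mul_sum, h, sum_const,
    nsmul_eq_mul]
  ring

theorem Finset.card_filter_mul_le_sum {ι : Type*} (s : Finset ι) (g : ι → ℝ)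
    (hg : ∀ i ∈ s, 0 ≤ g i) (t : ℝ) :
    #{i ∈ s | t ≤ g i} * t ≤ ∑ i ∈ s, g i := by
  calc #{i ∈ s | t ≤ g i} * t ≤ ∑ i ∈ s with t ≤ g i, g i := by
        simpa [nsmul_eq_mul] using card_nsmul_le_sum _ g t (fun i hi => (mem_filter.1 hi).2)
    _ ≤ ∑ i ∈ s, g i :=
        sum_le_sum_of_subset_of_nonneg (filter_subset _ _) fun i hi _ => hg i hi

theorem le_card_filter_forall_abs_le_of_sum_sq_le {Y Z : Type*} [Fintype Y] [Fintype Z]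
    (f : Y → Z → ℝ) {ε : ℝ} (hε0 : 0 < ε) (hε : ε * Fintype.card Y ≤ 1)
    (h : ∑ z, ∑ y, f y z ^ 2 ≤ Fintype.card Y * Fintype.card Z * ε ^ 4) :
    (1 - ε) * Fintype.card Z ≤ #{z | ∀ y, |f y z| ≤ ε} := by
  classical
  set good : Finset Z := {z | ∀ y, |f y z| ≤ ε}
  set large : Finset Z := {z | ε ^ 2 ≤ ∑ y, f y z ^ 2}
  have hcompl : goodᶜ ⊆ large := by
    intro z hz
    simp only [good, large, compl_filter, mem_filter, mem_univ, true_and, not_forall,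
      not_le] at hz ⊢
    obtain ⟨y, hy⟩ := hz
    calc ε ^ 2 ≤ f y z ^ 2 := by nlinarith [sq_abs (f y z)]
      _ ≤ ∑ y, f y z ^ 2 := single_le_sum (fun y _ => sq_nonneg (f y z)) (mem_univ y)
  have hlarge : (#large : ℝ) * ε ^ 2 ≤ Fintype.card Y * Fintype.card Z * ε ^ 4 :=
    (card_filter_mul_le_sum univ _ (fun z _ => sum_nonneg fun y _ => sq_nonneg (f y z)) _).trans h
  have hbad : (#goodᶜ : ℝ) ≤ ε * Fintype.card Z := by
    have hε2 : 0 < ε ^ 2 := by positivity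
    calc (#goodᶜ : ℝ) ≤ #large := by exact_mod_cast card_le_card hcompl
      _ ≤ Fintype.card Y * Fintype.card Z * ε ^ 2 := by nlinarith
      _ = (ε * Fintype.card Y) * (ε * Fintype.card Z) := by ring
      _ ≤ ε * Fintype.card Z := mul_le_of_le_one_left (by positivity) hε
  have hsplit : (#good : ℝ) + #goodᶜ = Fintype.card Z := by exact_mod_cast card_add_card_compl good
  linarith

theorem Set.Finite.sum_ncard_sep_eq {α β : Type*} [Fintype β] {s : Set α}
    (hs : s.Finite) (f : α → β) :
    ∑ b, {x ∈ s | f x = b}.ncard = s.ncard := by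
  classical
  rw [ncard_eq_toFinset_card s hs,
    card_eq_sum_card_fiberwise (f := f) (t := Finset.univ) (by simp)]
  refine sum_congr rfl fun b _ => ?_
  rw [ncard_eq_toFinset_card _ (hs.sep _)]
  congr 1
  ext x
  simp

section Sections

variable {k n : ℕ} (A : Set (Fin n → Fin k)) {I J : Finset (Fin n)}

theorem sum_secDens₂ (hk : 0 < k) (hIJ : Disjoint I J) (z : {j // j ∈ J} → Fin k) :
    ∑ y : {i // i ∈ I} → Fin k, secDens₂ k n A I J y z = (k : ℝ) ^ #I * secDens k n A J z := by
  have hsep : ∀ y : {i // i ∈ I} → Fin k,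
      {x ∈ A | (∀ i : {i // i ∈ I}, x i.1 = y i) ∧ ∀ j : {j // j ∈ J}, x j.1 = z j} =
        {x ∈ {x ∈ A | ∀ j : {j // j ∈ J}, x j.1 = z j} | I.restrict x = y} := by
    intro y
    ext x
    simp only [Set.mem_ofPred_eq, funext_iff, Finset.restrict]
    tauto
  have hcard : #I + #J ≤ n := by
    simpa [card_union_of_disjoint hIJ] using card_le_univ (I ∪ J)
  have hpow : (k : ℝ) ^ (n - #J) = (k : ℝ) ^ (n - #I - #J) * (k : ℝ) ^ #I := by
    rw [← pow_add]
    congr 1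
    omega
  have hk' : (k : ℝ) ≠ 0 := by exact_mod_cast hk.ne'
  unfold secDens₂ secDens
  rw [← sum_div, ← Nat.cast_sum, sum_congr rfl fun y _ => congrArg Set.ncard (hsep y),
    (Set.toFinite _).sum_ncard_sep_eq, hpow]
  field_simp

theorem secDens_piFinsetUnion (hIJ : Disjoint I J)
    (p : ({i // i ∈ I} → Fin k) × ({j // j ∈ J} → Fin k)) :
    secDens k n A (I ∪ J) (Equiv.piFinsetUnion (fun _ => Fin k) hIJ p) =
      secDens₂ k n A I J p.1 p.2 := by
  have hset : {x ∈ A | ∀ i : {i // i ∈ I ∪ J},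
      x i.1 = Equiv.piFinsetUnion (fun _ => Fin k) hIJ p i} =
      {x ∈ A | (∀ i : {i // i ∈ I}, x i.1 = p.1 i) ∧ ∀ j : {j // j ∈ J}, x j.1 = p.2 j} := by
    ext x
    simp only [Set.mem_ofPred_eq, Subtype.forall, mem_union]
    refine and_congr_right fun _ => ⟨fun hx => ⟨fun i hi => ?_, fun j hj => ?_⟩, ?_⟩
    · rw [hx i (Or.inl hi), Equiv.piFinsetUnion_left]
    · rw [hx j (Or.inr hj), Equiv.piFinsetUnion_right]
    · rintro ⟨hy, hz⟩ i (hi | hi)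
      · rw [hy i hi, Equiv.piFinsetUnion_left]
      · rw [hz i hi, Equiv.piFinsetUnion_right]
  unfold secDens secDens₂
  rw [hset, card_union_of_disjoint hIJ, Nat.sub_add_eq]

theorem energy_union (hIJ : Disjoint I J) :
    energy k n A (I ∪ J) = (∑ y : {i // i ∈ I} → Fin k, ∑ z : {j // j ∈ J} → Fin k,
      secDens₂ k n A I J y z ^ 2) / ((k : ℝ) ^ #I * (k : ℝ) ^ #J) := by
  unfold energy
  rw [card_union_of_disjoint hIJ, pow_add, ← Fintype.sum_prod_type',
    ← (Equiv.piFinsetUnion (fun _ => Fin k) hIJ).sum_comp]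
  simp only [secDens_piFinsetUnion]

theorem sum_sq_secDens₂_sub_secDens (hk : 0 < k) (hIJ : Disjoint I J) :
    ∑ z : {j // j ∈ J} → Fin k, ∑ y : {i // i ∈ I} → Fin k,
      (secDens₂ k n A I J y z - secDens k n A J z) ^ 2 =
      (k : ℝ) ^ #I * (k : ℝ) ^ #J * (energy k n A (I ∪ J) - energy k n A J) := by
  have hcard : #(univ : Finset ({i // i ∈ I} → Fin k)) = (k : ℝ) ^ #I := by simp
  have hk' : (k : ℝ) ≠ 0 := by exact_mod_cast hk.ne'
  have hdev (z : {j // j ∈ J} → Fin k) :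
      ∑ y : {i // i ∈ I} → Fin k, (secDens₂ k n A I J y z - secDens k n A J z) ^ 2 =
        ∑ y : {i // i ∈ I} → Fin k, secDens₂ k n A I J y z ^ 2 -
          (k : ℝ) ^ #I * secDens k n A J z ^ 2 := by
    rw [sum_sq_sub_eq_of_sum_eq_card_mul _ _ (by rw [hcard]; exact sum_secDens₂ A hk hIJ z),
      hcard]
  rw [sum_congr rfl fun z _ => hdev z, sum_sub_distrib, sum_comm, energy_union A hIJ, energy,
    ← mul_sum]
  field_simp

end Sections

/-- If the energy increment `e_{I∪J}(A) - e_J(A)` is at most `ε⁴`, then for a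
proportion at least `1 - ε` of the `z ∈ [k]^J` we have
`|dens(A_{(y,z)}) - dens(A_z)| ≤ ε` for every `y ∈ [k]^I`. -/
theorem energy_increment_sections (k n : ℕ) (hk : 2 ≤ k) (I J : Finset (Fin n))
    (hIJ : Disjoint I J) (A : Set (Fin n → Fin k)) (ε : ℝ) (hε0 : 0 < ε)
    (hε : ε < ((k : ℝ) ^ I.card)⁻¹)
    (h : energy k n A (I ∪ J) - energy k n A J ≤ ε ^ 4) :
    1 - ε ≤ (Set.ncard {z : {j : Fin n // j ∈ J} → Fin k |
        ∀ y : {i : Fin n // i ∈ I} → Fin k,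
          |secDens₂ k n A I J y z - secDens k n A J z| ≤ ε} : ℝ) / (k : ℝ) ^ J.card := by
  have hk0 : 0 < k := by omega
  have hcardI : (Fintype.card ({i // i ∈ I} → Fin k) : ℝ) = (k : ℝ) ^ #I := by simp
  have hcardJ : (Fintype.card ({j // j ∈ J} → Fin k) : ℝ) = (k : ℝ) ^ #J := by simp
  have hsmall : ε * Fintype.card ({i // i ∈ I} → Fin k) ≤ 1 := by
    rw [hcardI, ← le_div_iff₀ (by positivity), one_div]
    exact hε.le
  have hdev : ∑ z, ∑ y, (secDens₂ k n A I J y z - secDens k n A J z) ^ 2 ≤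
      Fintype.card ({i // i ∈ I} → Fin k) * Fintype.card ({j // j ∈ J} → Fin k) * ε ^ 4 := by
    rw [sum_sq_secDens₂_sub_secDens A hk0 hIJ, hcardI, hcardJ]
    exact mul_le_mul_of_nonneg_left h (by positivity)
  have hgood := le_card_filter_forall_abs_le_of_sum_sq_le _ hε0 hsmall hdev
  rw [hcardJ] at hgood
  rw [le_div_iff₀ (by positivity), ← coe_filter_univ, Set.ncard_coe_finset]
  exact hgood
end

section
/- Let k, n ∈ ℕ with k ≥ 2, let I and J be disjoint subsets of {0,…,n−1}, let A ⊆ [k]^n and let 0 < ε < k^{−|I|}. If e_{I∪J}(A) − e_J(A) ≤ ε^4 / 16, then |dens(A_y) − dens(A)| ≤ ε for every y ∈ [k]^I. -/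
/-!
Write `f y z = dens(A_(y,z))` for `y ∈ [k]^I` and `z ∈ [k]^J`. Averaging `f` over `y` gives
`dens(A_z)`, averaging over `z` gives `dens(A_y)`, and averaging over both gives `dens(A)`. Hence
`e_{I∪J}(A) - e_J(A)` is the variance `𝔼_{y,z} (f y z - dens(A_z))²`. For a single `y₀`,
Cauchy–Schwarz in `z` bounds `(dens(A_{y₀}) - dens(A))²` by `k^|I|` times this variance, i.e. by
`k^|I| ε⁴/16`, which is less than `ε²` since `k^|I| ε < 1`.
-/

open Finset
open scoped BigOperators

section Averaging

variable {R ι κ : Type*} [Field R] [LinearOrder R] [IsStrictOrderedRing R] [Fintype ι] [Fintype κ]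

lemma expect_sub_expect_sq [Nonempty ι] (g : ι → R) :
    𝔼 i, (g i - 𝔼 i', g i') ^ 2 = 𝔼 i, g i ^ 2 - (𝔼 i, g i) ^ 2 := by
  simp only [sub_sq, expect_add_distrib, expect_sub_distrib, ← expect_mul, ← mul_expect,
    Fintype.expect_const]
  ring

lemma sq_expect_le_expect_sq (g : κ → R) : (𝔼 j, g j) ^ 2 ≤ 𝔼 j, g j ^ 2 := by
  cases isEmpty_or_nonempty κ
  · simp
  · simpa [expect_const] using expect_mul_sq_le_sq_mul_sq univ g 1

lemma sq_expect_sub_expect_expect_le [Nonempty ι] (f : ι → κ → R) (i₀ : ι) :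
    (𝔼 j, f i₀ j - 𝔼 j, 𝔼 i, f i j) ^ 2 ≤
      Fintype.card ι * (𝔼 i, 𝔼 j, f i j ^ 2 - 𝔼 j, (𝔼 i, f i j) ^ 2) := by
  have variance : 𝔼 i, 𝔼 j, (f i j - 𝔼 i', f i' j) ^ 2 =
      𝔼 i, 𝔼 j, f i j ^ 2 - 𝔼 j, (𝔼 i, f i j) ^ 2 := by
    rw [expect_comm, expect_comm univ univ (fun i j => f i j ^ 2), ← expect_sub_distrib]
    exact expect_congr rfl fun j _ => expect_sub_expect_sq (f · j)
  rw [← variance, Fintype.card_mul_expect, ← expect_sub_distrib]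
  calc (𝔼 j, (f i₀ j - 𝔼 i, f i j)) ^ 2 ≤ 𝔼 j, (f i₀ j - 𝔼 i, f i j) ^ 2 :=
        sq_expect_le_expect_sq _
    _ ≤ ∑ i, 𝔼 j, (f i j - 𝔼 i', f i' j) ^ 2 :=
        single_le_sum (f := fun i => 𝔼 j, (f i j - 𝔼 i', f i' j) ^ 2)
          (fun i _ => expect_nonneg fun j _ => sq_nonneg _) (mem_univ i₀)

end Averaging

lemma Fintype.expect_piFinsetUnion {ι M : Type*} [DecidableEq ι] [AddCommMonoid M] [Module ℚ≥0 M]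
    {α : ι → Type*} [∀ i, Fintype (α i)] {s t : Finset ι} (h : Disjoint s t)
    (g : (∀ i : (s ∪ t : Finset ι), α i) → M) :
    𝔼 w, g w = 𝔼 y, 𝔼 z, g (Equiv.piFinsetUnion α h (y, z)) := by
  rw [← Fintype.expect_equiv (Equiv.piFinsetUnion α h) _ g (fun _ => rfl), ← univ_product_univ,
    expect_product]

section Fibers

variable {k n : ℕ}

-- The section `A_v` of the paper, kept inside `[k]^n` rather than `[k]^{{0,…,n-1} ∖ S}`.
def fiber (A : Set (Fin n → Fin k)) (S : Finset (Fin n)) (v : S → Fin k) :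
    Set (Fin n → Fin k) :=
  {x ∈ A | ∀ i : S, x i.1 = v i}

lemma secDens_eq_ncard_fiber (A : Set (Fin n → Fin k)) (S : Finset (Fin n)) (v : S → Fin k) :
    secDens k n A S v = (fiber A S v).ncard / (k : ℝ) ^ (n - #S) :=
  rfl

lemma ncard_eq_sum_ncard_fiber (A : Set (Fin n → Fin k)) (S : Finset (Fin n)) :
    A.ncard = ∑ v : S → Fin k, (fiber A S v).ncard := by
  classical
  rw [Set.ncard_eq_toFinset_card', card_eq_sum_card_fiberwise (f := S.restrict) (t := univ)
    (fun _ _ => mem_univ _)]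
  refine sum_congr rfl fun v _ => ?_
  rw [← Set.ncard_coe_finset]
  congr 1
  ext x
  simp [fiber, funext_iff]

lemma fiber_comm (A : Set (Fin n → Fin k)) {I J : Finset (Fin n)} (y : I → Fin k) (z : J → Fin k) :
    fiber (fiber A I y) J z = fiber (fiber A J z) I y := by
  ext x
  simp only [fiber, Set.mem_ofPred_eq]
  tauto

lemma fiber_union (A : Set (Fin n → Fin k)) {I J : Finset (Fin n)} (hIJ : Disjoint I J)
    (y : I → Fin k) (z : J → Fin k) :
    fiber A (I ∪ J) (Equiv.piFinsetUnion (fun _ => Fin k) hIJ (y, z)) = fiber (fiber A J z) I y := by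
  ext x
  simp only [fiber, Set.mem_ofPred_eq, Subtype.forall, mem_union]
  constructor
  · rintro ⟨hA, hx⟩
    exact ⟨⟨hA, fun a ha => (hx a (.inr ha)).trans (Equiv.piFinsetUnion_right _ hIJ ha _)⟩,
      fun a ha => (hx a (.inl ha)).trans (Equiv.piFinsetUnion_left _ hIJ ha _)⟩
  · rintro ⟨⟨hA, hJ⟩, hI⟩
    refine ⟨hA, fun a ha => ?_⟩
    rcases ha with ha | ha
    · exact (hI a ha).trans (Equiv.piFinsetUnion_left (fun _ => Fin k) hIJ ha _).symm
    · exact (hJ a ha).trans (Equiv.piFinsetUnion_right (fun _ => Fin k) hIJ ha _).symm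

lemma expect_ncard_fiber_div (A : Set (Fin n → Fin k)) (S : Finset (Fin n)) {m : ℕ}
    (hm : #S ≤ m) :
    𝔼 v : S → Fin k, ((fiber A S v).ncard : ℝ) / (k : ℝ) ^ (m - #S) = A.ncard / (k : ℝ) ^ m := by
  rw [Fintype.expect_eq_sum_div_card, ← sum_div, ← Nat.cast_sum, ← ncard_eq_sum_ncard_fiber]
  simp only [Fintype.card_fun, Fintype.card_coe, Fintype.card_fin, Nat.cast_pow]
  rw [div_div, ← pow_add, Nat.sub_add_cancel hm]

end Fibers

lemma abs_le_of_sq_le_mul_pow_four {N ε d : ℝ} (hN : 1 ≤ N) (hε0 : 0 < ε) (hε : ε < N⁻¹)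
    (hd : d ^ 2 ≤ N * (ε ^ 4 / 16)) : |d| ≤ ε := by
  have hN0 : 0 < N := zero_lt_one.trans_le hN
  have hNε : N * ε < 1 := by simpa [hN0.ne'] using mul_lt_mul_of_pos_left hε hN0
  have hε1 : ε < 1 := hε.trans_le (inv_le_one_of_one_le₀ hN)
  refine abs_le_of_sq_le_sq ?_ hε0.le
  have hε3 : 0 < ε ^ 3 := by positivity
  nlinarith [mul_lt_mul_of_pos_right hNε hε3,
    mul_lt_mul_of_pos_right hε1 (by positivity : 0 < ε ^ 2)]

section SectionDensities

variable {k n : ℕ} (A : Set (Fin n → Fin k)) {I J : Finset (Fin n)}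

lemma card_add_card_le_of_disjoint (hIJ : Disjoint I J) : #I + #J ≤ n := by
  simpa [card_union_of_disjoint hIJ] using card_le_univ (I ∪ J)

lemma expect_secDens (S : Finset (Fin n)) : 𝔼 v, secDens k n A S v = A.ncard / (k : ℝ) ^ n :=
  expect_ncard_fiber_div A S ((card_le_univ S).trans_eq (Fintype.card_fin n))

lemma energy_eq_expect (S : Finset (Fin n)) : energy k n A S = 𝔼 v, secDens k n A S v ^ 2 := by
  simp [energy, Fintype.expect_eq_sum_div_card]

lemma expect_secDens_union_left (hIJ : Disjoint I J) (z : J → Fin k) :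
    𝔼 y, secDens k n A (I ∪ J) (Equiv.piFinsetUnion (fun _ => Fin k) hIJ (y, z)) =
      secDens k n A J z := by
  have hcard : n - #(I ∪ J) = n - #J - #I := by
    rw [card_union_of_disjoint hIJ, add_comm, Nat.sub_sub]
  simp only [secDens_eq_ncard_fiber, fiber_union A hIJ, hcard]
  exact expect_ncard_fiber_div _ I (Nat.le_sub_of_add_le (card_add_card_le_of_disjoint hIJ))

lemma expect_secDens_union_right (hIJ : Disjoint I J) (y : I → Fin k) :
    𝔼 z, secDens k n A (I ∪ J) (Equiv.piFinsetUnion (fun _ => Fin k) hIJ (y, z)) =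
      secDens k n A I y := by
  have hcard : n - #(I ∪ J) = n - #I - #J := by rw [card_union_of_disjoint hIJ, Nat.sub_sub]
  simp only [secDens_eq_ncard_fiber, fiber_union A hIJ, ← fiber_comm A y, hcard]
  exact expect_ncard_fiber_div _ J (Nat.le_sub_of_add_le' (card_add_card_le_of_disjoint hIJ))

end SectionDensities

/-- If the energy increment `e_{I∪J}(A) - e_J(A)` is at most `ε⁴/16`, then
`|dens(A_y) - dens(A)| ≤ ε` for every `y ∈ [k]^I`. -/
theorem energy_increment_density (k n : ℕ) (hk : 2 ≤ k) (I J : Finset (Fin n))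
    (hIJ : Disjoint I J) (A : Set (Fin n → Fin k)) (ε : ℝ) (hε0 : 0 < ε)
    (hε : ε < ((k : ℝ) ^ I.card)⁻¹)
    (h : energy k n A (I ∪ J) - energy k n A J ≤ ε ^ 4 / 16) :
    ∀ y : {i : Fin n // i ∈ I} → Fin k,
      |secDens k n A I y - (Set.ncard A : ℝ) / (k : ℝ) ^ n| ≤ ε := by
  intro y₀
  have : Nonempty (I → Fin k) := ⟨fun _ => ⟨0, by omega⟩⟩
  have hsq : (secDens k n A I y₀ - A.ncard / (k : ℝ) ^ n) ^ 2 ≤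
      (k : ℝ) ^ #I * (energy k n A (I ∪ J) - energy k n A J) := by
    simpa only [← Fintype.expect_piFinsetUnion (α := fun _ => Fin k) hIJ
        (fun w => secDens k n A (I ∪ J) w ^ 2),
      expect_secDens_union_right, expect_secDens_union_left, expect_secDens, ← energy_eq_expect,
      Fintype.card_fun, Fintype.card_coe, Fintype.card_fin, Nat.cast_pow] using
      sq_expect_sub_expect_expect_le
        (fun y z => secDens k n A (I ∪ J) (Equiv.piFinsetUnion (fun _ => Fin k) hIJ (y, z))) y₀
  have hk1 : (1 : ℝ) ≤ (k : ℝ) ^ #I := one_le_pow₀ (by norm_cast; omega)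
  exact abs_le_of_sq_le_mul_pow_four hk1 hε0 hε
    (hsq.trans (mul_le_mul_of_nonneg_left h (by positivity)))
end
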